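/- Let T be a random variable with P(T=t)=p(1-p)^{t-1} for integers t≥1, where 0<p<1. Let n≥1 be an integer and K=⌈T/n⌉. Then for every integer b≥1, E[nK - T | K = b] = n - 1/p + n(1-p)^n/(1-(1-p)^n); consequently E[nK - T] = n - 1/p + n(1-p)^n/(1-(1-p)^n). -/

import Mathlib

open MeasureTheory ProbabilityTheory Finset

/-!
Given `K = c + 1`, the change time `T` lies in the batch `(n c, n c + n]`, on which its law is
`(1 - p)^(n c)` times that of a geometric variable truncated to `n` slots. That factor cancels in
the conditional mean, so `E[nK - T | K = b]` is the same number `l` for every `b ≥ 1`. Since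
`P(T = 0) = 0`, the event `K = 0` is null, and averaging the conditional means over the batches
gives `E[nK - T] = l`.
-/

lemma Nat.add_sub_one_div_eq_succ_iff {n t c : ℕ} (hn : 0 < n) :
    (t + n - 1) / n = c + 1 ↔ t ∈ Ioc (n * c) (n * c + n) := by
  rw [mem_Ioc, le_antisymm_iff, Nat.div_le_iff_le_mul_add_pred hn, Nat.le_div_iff_mul_le hn,
    mul_add, add_mul, mul_comm c]
  omega

lemma abs_natCast_mul_add_sub_one_div_sub_le {n : ℕ} (hn : 0 < n) (t : ℕ) :
    |((n * ((t + n - 1) / n) : ℕ) : ℝ) - t| ≤ n := by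
  have := Nat.div_add_mod (t + n - 1) n
  have := Nat.mod_lt (t + n - 1) hn
  have hlow : (t : ℝ) ≤ ((n * ((t + n - 1) / n) : ℕ) : ℝ) := by exact_mod_cast (by omega)
  have hhigh : ((n * ((t + n - 1) / n) : ℕ) : ℝ) ≤ t + n := by exact_mod_cast (by omega)
  rw [abs_le]
  constructor <;> linarith [(n.cast_nonneg : (0 : ℝ) ≤ n)]

lemma Finset.sum_Ioc_add_eq_sum_range {M : Type*} [AddCommMonoid M] (f : ℕ → M) (m n : ℕ) :
    ∑ t ∈ Ioc m (m + n), f t = ∑ k ∈ range n, f (m + k + 1) := by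
  rw [← Ico_add_one_add_one_eq_Ioc, sum_Ico_eq_sum_range]
  congr! 2 <;> omega

lemma one_sub_mul_sum_range_mul_pow {R : Type*} [CommRing R] (q : R) (n : ℕ) :
    (1 - q) * ∑ k ∈ range n, ((n : R) - 1 - k) * q ^ k = n - ∑ k ∈ range n, q ^ k := by
  induction n with
  | zero => simp
  | succ n ih =>
    have hshift : ∑ k ∈ range n, ((n + 1 : ℕ) - 1 - k : R) * q ^ k
        = ∑ k ∈ range n, ((n : R) - 1 - k) * q ^ k + ∑ k ∈ range n, q ^ k := by
      rw [← sum_add_distrib]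
      congr! 1 with k
      push_cast
      ring
    rw [sum_range_succ, hshift, geom_sum_succ]
    push_cast
    linear_combination ih

section GeometricBatch

variable (p : ℝ) (m n : ℕ)

lemma sum_Ioc_geometric_pmf :
    ∑ t ∈ Ioc m (m + n), p * (1 - p) ^ (t - 1) = (1 - p) ^ m * (1 - (1 - p) ^ n) := by
  rw [sum_Ioc_add_eq_sum_range, ← mul_neg_geom_sum, sub_sub_cancel, mul_sum, mul_sum]
  refine sum_congr rfl fun k _ ↦ ?_
  rw [Nat.add_sub_cancel, pow_add]
  ring

lemma sum_Ioc_geometric_pmf_mul_sub :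
    ∑ t ∈ Ioc m (m + n), p * (1 - p) ^ (t - 1) * (((m + n : ℕ) : ℝ) - t)
      = (1 - p) ^ m * (n - ∑ k ∈ range n, (1 - p) ^ k) := by
  rw [sum_Ioc_add_eq_sum_range, ← one_sub_mul_sum_range_mul_pow, sub_sub_cancel, mul_sum, mul_sum]
  refine sum_congr rfl fun k _ ↦ ?_
  rw [Nat.add_sub_cancel, pow_add]
  push_cast
  ring

end GeometricBatch

lemma geometric_batch_mean_delay {p : ℝ} (hp0 : 0 < p) (hp1 : p < 1) (m : ℕ) {n : ℕ}
    (hn : 0 < n) :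
    (∑ t ∈ Ioc m (m + n), p * (1 - p) ^ (t - 1))⁻¹
        * ∑ t ∈ Ioc m (m + n), p * (1 - p) ^ (t - 1) * (((m + n : ℕ) : ℝ) - t)
      = n - 1 / p + n * (1 - p) ^ n / (1 - (1 - p) ^ n) := by
  rw [sum_Ioc_geometric_pmf, sum_Ioc_geometric_pmf_mul_sub]
  have hgeom : p * ∑ k ∈ range n, (1 - p) ^ k = 1 - (1 - p) ^ n := by
    simpa using mul_neg_geom_sum (1 - p) n
  have hpow : 0 < (1 - p) ^ m := pow_pos (by linarith) m
  have hbatch : (1 - p) ^ n < 1 := pow_lt_one₀ (by linarith) (by linarith) hn.ne'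
  field_simp [hpow.ne', (sub_pos.2 hbatch).ne']
  linear_combination -hgeom

section Fibers

variable {Ω α : Type*} [MeasurableSpace Ω] {P : Measure Ω} [MeasurableSpace α] {T : Ω → α}

lemma ProbabilityTheory.integral_cond_eq_inv_mul_setIntegral (f : Ω → ℝ) (s : Set Ω) :
    ∫ ω, f ω ∂P[|s] = (P.real s)⁻¹ * ∫ ω in s, f ω ∂P := by
  rw [cond, integral_smul_measure, ENNReal.toReal_inv, smul_eq_mul, measureReal_def]

lemma setIntegral_comp_preimage_finset [DiscreteMeasurableSpace α] [IsFiniteMeasure P]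
    (hT : Measurable T) (f : α → ℝ) (s : Finset α) :
    ∫ ω in T ⁻¹' s, f (T ω) ∂P = ∑ t ∈ s, P.real (T ⁻¹' {t}) * f t := by
  rw [← setIntegral_map s.measurableSet Measurable.of_discrete.aestronglyMeasurable
    hT.aemeasurable, setIntegral_finset s IntegrableOn.finset]
  simp only [map_measureReal_apply hT (measurableSet_singleton _), smul_eq_mul]

variable [MeasurableSingletonClass α] [Countable α]

lemma hasSum_measureReal_preimage_singleton [IsFiniteMeasure P] (hT : Measurable T) :
    HasSum (fun b ↦ P.real (T ⁻¹' {b})) (P.real Set.univ) := by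
  simpa [← Set.preimage_iUnion, Set.iUnion_of_singleton] using hasSum_integral_iUnion
    (fun b ↦ hT (measurableSet_singleton b)) (pairwise_disjoint_fiber T)
    (integrable_const (μ := P) (1 : ℝ)).integrableOn

lemma integral_eq_of_forall_integral_cond_fiber_eq [IsProbabilityMeasure P] (hT : Measurable T)
    {F : Ω → ℝ} (hF : Integrable F P) {l : ℝ}
    (h : ∀ b, P (T ⁻¹' {b}) ≠ 0 → ∫ ω, F ω ∂P[|T ⁻¹' {b}] = l) :
    ∫ ω, F ω ∂P = l := by
  have hfiber : ∀ b, ∫ ω in T ⁻¹' {b}, F ω ∂P = P.real (T ⁻¹' {b}) * l := by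
    intro b
    by_cases hb : P (T ⁻¹' {b}) = 0
    · simp [Measure.restrict_eq_zero.2 hb, measureReal_def, hb]
    · rw [← h b hb, integral_cond_eq_inv_mul_setIntegral, mul_inv_cancel_left₀]
      exact ENNReal.toReal_ne_zero.2 ⟨hb, measure_ne_top P _⟩
  have hsum := hasSum_integral_iUnion (fun b ↦ hT (measurableSet_singleton b))
    (pairwise_disjoint_fiber T) hF.integrableOn
  simp only [← Set.preimage_iUnion, Set.iUnion_of_singleton, Set.preimage_univ,
    Measure.restrict_univ, hfiber] at hsum
  simpa using hsum.unique ((hasSum_measureReal_preimage_singleton hT).mul_right l)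

end Fibers

section GeometricLaw

variable {Ω : Type*} [MeasurableSpace Ω] {P : Measure Ω} {T : Ω → ℕ} {p : ℝ}

lemma integral_cond_preimage_Ioc_of_geometric [IsFiniteMeasure P] (hT : Measurable T)
    (hp0 : 0 < p) (hp1 : p < 1)
    (hTdist : ∀ t, 1 ≤ t → P.real (T ⁻¹' {t}) = p * (1 - p) ^ (t - 1)) (m : ℕ) {n : ℕ}
    (hn : 0 < n) :
    ∫ ω, (((m + n : ℕ) : ℝ) - T ω) ∂P[|T ⁻¹' (Ioc m (m + n) : Finset ℕ)]
      = n - 1 / p + n * (1 - p) ^ n / (1 - (1 - p) ^ n) := by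
  have hweights : ∀ t ∈ Ioc m (m + n), P.real (T ⁻¹' {t}) = p * (1 - p) ^ (t - 1) :=
    fun t ht ↦ hTdist t (by rw [mem_Ioc] at ht; omega)
  rw [integral_cond_eq_inv_mul_setIntegral,
    setIntegral_comp_preimage_finset hT (fun t ↦ ((m + n : ℕ) : ℝ) - t),
    ← sum_measureReal_preimage_singleton _ fun t _ ↦ hT (measurableSet_singleton t),
    sum_congr rfl hweights, sum_congr rfl fun t ht ↦ congrArg (· * _) (hweights t ht)]
  exact geometric_batch_mean_delay hp0 hp1 m hn

lemma measure_preimage_zero_of_geometric [IsProbabilityMeasure P] (hT : Measurable T)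
    (hp0 : 0 < p) (hp1 : p ≤ 1)
    (hTdist : ∀ t, 1 ≤ t → P.real (T ⁻¹' {t}) = p * (1 - p) ^ (t - 1)) :
    P (T ⁻¹' {0}) = 0 := by
  have hmass := hasSum_measureReal_preimage_singleton (P := P) hT
  rw [← hasSum_nat_add_iff' 1] at hmass
  simp only [hTdist _ (Nat.le_add_left 1 _), Nat.add_sub_cancel, range_one, sum_singleton,
    probReal_univ] at hmass
  have hgeom : HasSum (fun t ↦ p * (1 - p) ^ t) 1 := by
    simpa [hp0.ne'] using (hasSum_geometric_of_lt_one (r := 1 - p) (by linarith)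
      (by linarith)).mul_left p
  have hzero : P.real (T ⁻¹' {0}) = 0 := by linarith [hmass.unique hgeom]
  rwa [measureReal_eq_zero_iff] at hzero

end GeometricLaw

/-- Mean coarse sampling delay: if `P(T = t) = p (1-p)^(t-1)` for `t ≥ 1` and
`K = ⌈T/n⌉`, then for every `b ≥ 1` the conditional mean of `nK - T` given
`K = b` equals `l = n - 1/p + n (1-p)^n / (1 - (1-p)^n)`; consequently the
unconditional mean of `nK - T` also equals `l`. -/
theorem mean_coarse_sampling_delay
    {Ω : Type*} [MeasurableSpace Ω] (P : Measure Ω) [IsProbabilityMeasure P]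
    (p : ℝ) (hp0 : 0 < p) (hp1 : p < 1)
    (T : Ω → ℕ) (hT : Measurable T)
    (hTdist : ∀ t : ℕ, 1 ≤ t →
      (P {ω | T ω = t}).toReal = p * (1 - p) ^ (t - 1))
    (n : ℕ) (hn : 1 ≤ n)
    (K : Ω → ℕ) (hK : ∀ ω, K ω = (T ω + n - 1) / n) :
    (∀ b : ℕ, 1 ≤ b →
      ∫ ω, (((n * K ω : ℕ) : ℝ) - (T ω : ℝ)) ∂(P[|{ω | K ω = b}])
        = (n : ℝ) - 1 / p + (n : ℝ) * (1 - p) ^ n / (1 - (1 - p) ^ n))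
    ∧ ∫ ω, (((n * K ω : ℕ) : ℝ) - (T ω : ℝ)) ∂P
        = (n : ℝ) - 1 / p + (n : ℝ) * (1 - p) ^ n / (1 - (1 - p) ^ n) := by
  have hKm : Measurable K := by
    rw [show K = (fun t ↦ (t + n - 1) / n) ∘ T from funext hK]
    exact Measurable.of_discrete.comp hT
  have hcond (b : ℕ) (hb : 1 ≤ b) : ∫ ω, (((n * K ω : ℕ) : ℝ) - (T ω : ℝ)) ∂(P[|{ω | K ω = b}])
      = (n : ℝ) - 1 / p + (n : ℝ) * (1 - p) ^ n / (1 - (1 - p) ^ n) := by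
    obtain ⟨c, rfl⟩ := Nat.exists_eq_add_of_le' hb
    have hbatch : {ω | K ω = c + 1} = T ⁻¹' (Ioc (n * c) (n * c + n) : Finset ℕ) := by
      ext ω
      simp [hK, Nat.add_sub_one_div_eq_succ_iff hn]
    rw [hbatch, ← integral_cond_preimage_Ioc_of_geometric hT hp0 hp1 hTdist (n * c) hn]
    refine integral_congr_ae (ae_cond_of_forall_mem (hT (by simp)) fun ω hω ↦ ?_)
    rw [← hbatch] at hω
    simp only [show K ω = c + 1 from hω, mul_add_one]
  refine ⟨hcond, integral_eq_of_forall_integral_cond_fiber_eq hKm ?_ fun b hb ↦ hcond b ?_⟩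
  · refine Integrable.of_bound (by fun_prop) n (ae_of_all _ fun ω ↦ ?_)
    rw [Real.norm_eq_abs, hK]
    exact abs_natCast_mul_add_sub_one_div_sub_le hn (T ω)
  · have hK0 : K ⁻¹' {0} = T ⁻¹' {0} := by
      ext ω
      simp only [Set.mem_preimage, Set.mem_singleton_iff, hK, Nat.div_eq_zero_iff]
      omega
    refine Nat.one_le_iff_ne_zero.2 fun hb0 ↦ hb ?_
    rw [hb0, hK0]
    exact measure_preimage_zero_of_geometric hT hp0 hp1.le hTdist
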